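/- arXiv:2211.04820 — 2 statements merged into one kernel-verified Lean document; each statement's English description precedes it below -/
import Mathlib

section
/- Let P be a polyomino whose complement graph Ḡ_P is chordal. Then P has at most one maximal cell interval of cardinality at least 3; that is, if J is a maximal cell interval of P with |J| ≥ 3, then every maximal cell interval I ≠ J of P satisfies |I| ≤ 2. -/
/-- A cell of the grid, identified with its lower-left corner. -/
abbrev Cell : Type := ℤ × ℤ

/-- Two cells are adjacent if they differ by `(±1,0)` or `(0,±1)`. -/
def Adjacent (c d : Cell) : Prop :=
  (c.1 = d.1 ∧ (c.2 = d.2 + 1 ∨ d.2 = c.2 + 1)) ∨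
  (c.2 = d.2 ∧ (c.1 = d.1 + 1 ∨ d.1 = c.1 + 1))

/-- A polyomino: a finite nonempty set of cells, any two of which are joined by a
path of adjacent cells inside the set. -/
def IsPolyomino (P : Finset Cell) : Prop :=
  P.Nonempty ∧ ∀ c ∈ P, ∀ d ∈ P,
    Relation.ReflTransGen (fun a b => Adjacent a b ∧ a ∈ P ∧ b ∈ P) c d

/-- A horizontal segment of consecutive cells in a row. -/
def IsHSeg (S : Finset Cell) : Prop :=
  ∃ y a b : ℤ, a ≤ b ∧ S = (Finset.Icc a b).image (fun x => (x, y))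

/-- A vertical segment of consecutive cells in a column. -/
def IsVSeg (S : Finset Cell) : Prop :=
  ∃ x a b : ℤ, a ≤ b ∧ S = (Finset.Icc a b).image (fun y => (x, y))

/-- A maximal horizontal cell interval of `P`. -/
def IsMaxHInterval (P I : Finset Cell) : Prop :=
  IsHSeg I ∧ I ⊆ P ∧ ∀ I', IsHSeg I' → I' ⊆ P → I ⊆ I' → I' = I

/-- A maximal vertical cell interval of `P`. -/
def IsMaxVInterval (P I : Finset Cell) : Prop :=
  IsVSeg I ∧ I ⊆ P ∧ ∀ I', IsVSeg I' → I' ⊆ P → I ⊆ I' → I' = I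

/-- A maximal cell interval of `P`. -/
def IsMaxInterval (P I : Finset Cell) : Prop :=
  IsMaxHInterval P I ∨ IsMaxVInterval P I

/-- Two distinct cells of `P` attack each other if they lie in a common maximal
cell interval of `P`. -/
def Attacks (P : Finset Cell) (c d : Cell) : Prop :=
  c ≠ d ∧ ∃ I, IsMaxInterval P I ∧ c ∈ I ∧ d ∈ I

/-- A set of pairwise non-attacking cells of `P` (a face of the rook complex). -/
def IsRookSet (P F : Finset Cell) : Prop :=
  F ⊆ P ∧ ∀ c ∈ F, ∀ d ∈ F, ¬ Attacks P c d

/-- A maximal set of pairwise non-attacking cells of `P` (a facet of the rook complex). -/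
def IsMaxRookSet (P F : Finset Cell) : Prop :=
  IsRookSet P F ∧ ∀ G, IsRookSet P G → F ⊆ G → G = F

/-- An interval `I` is embedded if some set `F` of pairwise non-attacking cells,
disjoint from `I`, attacks every cell of `I`. -/
def IsEmbedded (P I : Finset Cell) : Prop :=
  ∃ F : Finset Cell, IsRookSet P F ∧ F ∩ I = ∅ ∧ ∀ c ∈ I, ∃ f ∈ F, Attacks P f c

/-- A partition of `P`: pairwise disjoint maximal cell intervals whose union is `P`. -/
def IsPartition (P : Finset Cell) (A : Finset (Finset Cell)) : Prop :=
  (∀ I ∈ A, IsMaxInterval P I) ∧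
  (∀ I ∈ A, ∀ J ∈ A, I ≠ J → Disjoint I J) ∧
  A.biUnion id = P

/-- A super partition: a partition none of whose intervals is embedded. -/
def IsSuperPartition (P : Finset Cell) (A : Finset (Finset Cell)) : Prop :=
  IsPartition P A ∧ ∀ I ∈ A, ¬ IsEmbedded P I

/-- `P` is a square: a translate of the `n × n` block of cells for some `n ≥ 1`. -/
def IsSquareBlock (P : Finset Cell) : Prop :=
  ∃ a b n : ℤ, 1 ≤ n ∧ P = Finset.Icc a (a + n - 1) ×ˢ Finset.Icc b (b + n - 1)

/-- The graph `G_P` on the cells of `P` whose edges are the attacking pairs. -/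
def GP (P : Finset Cell) : SimpleGraph {c : Cell // c ∈ P} where
  Adj c d := Attacks P (c : Cell) (d : Cell)
  symm := by
    constructor
    rintro c d ⟨hne, I, hI, hc, hd⟩
    exact ⟨hne.symm, I, hI, hd, hc⟩
  loopless := by
    constructor
    rintro c ⟨hne, -⟩
    exact hne rfl

/-- The complement graph `Ḡ_P`. -/
def GBar (P : Finset Cell) : SimpleGraph {c : Cell // c ∈ P} := (GP P)ᶜ

/-- `G` has an induced cycle of length `n`: an injective map from `ZMod n`
whose image induces exactly the cycle adjacencies. -/
def HasInducedCycle {V : Type*} (G : SimpleGraph V) (n : ℕ) : Prop :=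
  3 ≤ n ∧ ∃ f : ZMod n → V, Function.Injective f ∧
    ∀ i j : ZMod n, G.Adj (f i) (f j) ↔ (i = j + 1 ∨ j = i + 1)

/-- A graph is chordal if it has no induced cycle of length at least 4. -/
def IsChordal {V : Type*} (G : SimpleGraph V) : Prop :=
  ∀ n, 4 ≤ n → ¬ HasInducedCycle G n

/-- `P` is simple: any two cells outside `P` are joined by a path of adjacent
cells outside `P`. -/
def IsSimple (P : Finset Cell) : Prop :=
  ∀ c d : Cell, c ∉ P → d ∉ P →
    Relation.ReflTransGen (fun a b => Adjacent a b ∧ a ∉ P ∧ b ∉ P) c d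

/-- `P` is thin: it contains no four cells forming a `2 × 2` square. -/
def IsThin (P : Finset Cell) : Prop :=
  ¬ ∃ a : Cell, ({a, (a.1 + 1, a.2), (a.1, a.2 + 1), (a.1 + 1, a.2 + 1)} : Finset Cell) ⊆ P

/-- A path of distinct cells of `P`, consecutive cells being adjacent. -/
def IsCellPath (P : Finset Cell) (l : List Cell) : Prop :=
  l.Nodup ∧ (∀ c ∈ l, c ∈ P) ∧ l.Chain' Adjacent

/-- The number of changes of direction of a path of cells: positions `k`
(with `1 ≤ k ≤ length - 2`) where the `(k-1)`-st and `(k+1)`-st cells differ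
in both coordinates. -/
def dirChanges (l : List Cell) : ℕ :=
  ((Finset.Ico 1 (l.length - 1)).filter (fun k =>
    (l.getD (k - 1) (0, 0)).1 ≠ (l.getD (k + 1) (0, 0)).1 ∧
    (l.getD (k - 1) (0, 0)).2 ≠ (l.getD (k + 1) (0, 0)).2)).card

/-- The eight rotations/reflections of the grid. -/
def dihedralMaps : List (Cell → Cell) :=
  [fun p => (p.1, p.2), fun p => (-p.2, p.1), fun p => (-p.1, -p.2), fun p => (p.2, -p.1),
   fun p => (p.2, p.1), fun p => (-p.1, p.2), fun p => (-p.2, -p.1), fun p => (p.1, -p.2)]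

/-- `P` is obtained from `Q` by a translation, rotation or reflection of `ℤ²`. -/
def CongruentTo (P Q : Finset Cell) : Prop :=
  ∃ g ∈ dihedralMaps, ∃ t : Cell, P = Q.image (fun p => g p + t)

/-- A brush polyomino with handle `J`. -/
def IsBrush (P J : Finset Cell) : Prop :=
  IsPolyomino P ∧ IsSimple P ∧ IsThin P ∧ IsMaxInterval P J ∧
  (∀ I, IsMaxInterval P I → 2 ≤ I.card → I ≠ J → (I ∩ J).Nonempty) ∧
  (∀ c ∈ P, c ∈ J ∨ ∃ I, IsMaxInterval P I ∧ 2 ≤ I.card ∧ c ∈ I)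

/-- A short brush polyomino: a brush all of whose bristles have at most two cells. -/
def IsShortBrush (P : Finset Cell) : Prop :=
  ∃ J, IsBrush P J ∧ ∀ I, IsMaxInterval P I → I ≠ J → I.card ≤ 2

/-- A pure brush polyomino: handle `J` of cardinality `d` together with `d`
pairwise disjoint bristles `I 0, …, I (d-1)` perpendicular to `J`, each meeting
`J`, whose union is `P`. -/
def IsPureBrush (P J : Finset Cell) (d : ℕ) (I : Fin d → Finset Cell) : Prop :=
  IsPolyomino P ∧ IsSimple P ∧ IsThin P ∧
  J.card = d ∧
  ((IsMaxHInterval P J ∧ ∀ k, IsMaxVInterval P (I k)) ∨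
   (IsMaxVInterval P J ∧ ∀ k, IsMaxHInterval P (I k))) ∧
  (∀ j k, j ≠ k → Disjoint (I j) (I k)) ∧
  (∀ k, ((I k) ∩ J).Nonempty) ∧
  Finset.univ.biUnion I = P

/-- The `k`-th elementary symmetric polynomial of `x 0, …, x (d-1)`. -/
def esymm {R : Type*} [CommRing R] {d : ℕ} (k : ℕ) (x : Fin d → R) : R :=
  ∑ s ∈ Finset.powersetCard k (Finset.univ : Finset (Fin d)), ∏ i ∈ s, x i

/-- `G_P` has an induced matching with `n` edges `{A i, B i}`. -/
def HasInducedMatching (P : Finset Cell) (n : ℕ) : Prop :=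
  ∃ A B : Fin n → Cell,
    (∀ i, Attacks P (A i) (B i)) ∧
    (∀ i j, i ≠ j → A i ≠ A j) ∧
    (∀ i j, i ≠ j → B i ≠ B j) ∧
    (∀ i j, A i ≠ B j) ∧
    (∀ i j, i ≠ j →
      ¬ Attacks P (A i) (A j) ∧ ¬ Attacks P (A i) (B j) ∧ ¬ Attacks P (B i) (B j))

/-- The induced matching number `ν(G_P)`. -/
noncomputable def matchNum (P : Finset Cell) : ℕ := sSup {n | HasInducedMatching P n}

/-- `c` is a single cell of the maximal interval `I`: the maximal interval of `P`
through `c` perpendicular to `I` is `{c}`. -/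
def IsSingleCell (P I : Finset Cell) (c : Cell) : Prop :=
  c ∈ I ∧
  ((IsMaxHInterval P I ∧ ∀ I', IsMaxVInterval P I' → c ∈ I' → I' = {c}) ∨
   (IsMaxVInterval P I ∧ ∀ I', IsMaxHInterval P I' → c ∈ I' → I' = {c}))

/-!
Suppose two distinct maximal intervals `J` and `I` both have at least three cells. Inside them
one finds two attacking pairs with no attack across, an induced `2K₂` of `G_P`, except when `J`
and `I` are parallel rows of three cells over the same columns with every cell between them in
`P`; then the six cells span an induced triangular prism `K₃ □ K₂`. The complements of `2K₂` and
of the prism are the cycles `C₄` and `C₆`, which are thus induced cycles of `Ḡ_P`. Vertical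
intervals reduce to horizontal ones by transposing.
-/

open Finset

section InducedCycles

variable {V W : Type*} {G : SimpleGraph V}

lemma HasInducedCycle.map {H : SimpleGraph W} {n : ℕ} (e : G ↪g H) (h : HasInducedCycle G n) :
    HasInducedCycle H n := by
  obtain ⟨hn, f, hf, hadj⟩ := h
  exact ⟨hn, e ∘ f, e.injective.comp hf, fun i j => by simp [hadj]⟩

lemma hasInducedCycle_compl_four {a b : Fin 2 → V} (ha : G.Adj (a 0) (a 1))
    (hb : G.Adj (b 0) (b 1)) (hab : ∀ i j, Gᶜ.Adj (a i) (b j)) : HasInducedCycle Gᶜ 4 := by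
  have nab : ∀ i j, a i ≠ b j := fun i j => (hab i j).ne
  have hcase : ∀ i : ZMod 4, i = 0 ∨ i = 1 ∨ i = 2 ∨ i = 3 := by decide
  refine ⟨by norm_num, ![a 0, b 0, a 1, b 1], ?_, ?_⟩
  · intro i j h
    rcases hcase i with rfl | rfl | rfl | rfl <;> rcases hcase j with rfl | rfl | rfl | rfl <;>
      simp [ha.ne, hb.ne, ha.ne.symm, hb.ne.symm, nab, (nab _ _).symm] at h ⊢
  · intro i j
    rcases hcase i with rfl | rfl | rfl | rfl <;> rcases hcase j with rfl | rfl | rfl | rfl <;>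
      simp [hab, ha, hb, ha.symm, hb.symm, (hab _ _).symm] <;> decide

lemma hasInducedCycle_compl_six {a b : Fin 3 → V}
    (ha : ∀ i j, i ≠ j → G.Adj (a i) (a j)) (hb : ∀ i j, i ≠ j → G.Adj (b i) (b j))
    (hab : ∀ i, G.Adj (a i) (b i)) (hab' : ∀ i j, i ≠ j → Gᶜ.Adj (a i) (b j)) :
    HasInducedCycle Gᶜ 6 := by
  have na : ∀ i j, i ≠ j → a i ≠ a j := fun i j h => (ha i j h).ne
  have nb : ∀ i j, i ≠ j → b i ≠ b j := fun i j h => (hb i j h).ne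
  have nab : ∀ i j, a i ≠ b j := fun i j => by
    obtain rfl | h := eq_or_ne i j
    exacts [(hab i).ne, (hab' i j h).ne]
  have hcase : ∀ i : ZMod 6, i = 0 ∨ i = 1 ∨ i = 2 ∨ i = 3 ∨ i = 4 ∨ i = 5 := by decide
  refine ⟨by norm_num, ![a 0, b 1, a 2, b 0, a 1, b 2], ?_, ?_⟩
  · intro i j h
    rcases hcase i with rfl | rfl | rfl | rfl | rfl | rfl <;>
      rcases hcase j with rfl | rfl | rfl | rfl | rfl | rfl <;>
      simp [na, nb, nab, (nab _ _).symm] at h ⊢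
  · intro i j
    rcases hcase i with rfl | rfl | rfl | rfl | rfl | rfl <;>
      rcases hcase j with rfl | rfl | rfl | rfl | rfl | rfl <;>
      simp [ha, hb, hab, hab', (hab _).symm, (hab' _ _ _).symm] <;> decide

end InducedCycles

noncomputable abbrev rowSeg (y a b : ℤ) : Finset Cell := (Icc a b).image (fun x => (x, y))

noncomputable abbrev colSeg (x a b : ℤ) : Finset Cell := (Icc a b).image (fun y => (x, y))

section Segments

variable {a b : ℤ} {p : Cell}

lemma mem_rowSeg {y : ℤ} : p ∈ rowSeg y a b ↔ a ≤ p.1 ∧ p.1 ≤ b ∧ p.2 = y := by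
  obtain ⟨s, t⟩ := p
  simp only [mem_image, mem_Icc, Prod.mk.injEq]
  grind

lemma mem_colSeg {x : ℤ} : p ∈ colSeg x a b ↔ a ≤ p.2 ∧ p.2 ≤ b ∧ p.1 = x := by
  obtain ⟨s, t⟩ := p
  simp only [mem_image, mem_Icc, Prod.mk.injEq]
  grind

lemma card_rowSeg (y : ℤ) : (rowSeg y a b).card = (b + 1 - a).toNat := by
  rw [card_image_of_injective _ fun _ _ h => congrArg Prod.fst h, Int.card_Icc]

lemma card_colSeg (x : ℤ) : (colSeg x a b).card = (b + 1 - a).toNat := by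
  rw [card_image_of_injective _ fun _ _ h => congrArg Prod.snd h, Int.card_Icc]

lemma exists_two_ne (hab : a + 2 ≤ b) (x : ℤ) :
    ∃ u₁ u₂, a ≤ u₁ ∧ u₁ < u₂ ∧ u₂ ≤ b ∧ u₁ ≠ x ∧ u₂ ≠ x := by
  by_cases h : x = a
  · exact ⟨a + 1, a + 2, by omega⟩
  by_cases h' : x = a + 1
  · exact ⟨a, a + 2, by omega⟩
  · exact ⟨a, a + 1, by omega⟩

end Segments

def NonAttacking (P : Finset Cell) (c d : Cell) : Prop := c ≠ d ∧ ¬ Attacks P c d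

section Attacks

variable {P I J : Finset Cell} {c d : Cell}

lemma Attacks.mem (h : Attacks P c d) : c ∈ P ∧ d ∈ P := by
  obtain ⟨-, K, ⟨-, hKP, -⟩ | ⟨-, hKP, -⟩, hc, hd⟩ := h <;> exact ⟨hKP hc, hKP hd⟩

lemma nonAttacking_of_ne_of_ne {x₁ y₁ x₂ y₂ : ℤ} (hx : x₁ ≠ x₂) (hy : y₁ ≠ y₂) :
    NonAttacking P (x₁, y₁) (x₂, y₂) := by
  refine ⟨fun h => hx (congrArg Prod.fst h), ?_⟩
  rintro ⟨-, K, ⟨⟨y, a, b, -, rfl⟩, -⟩ | ⟨⟨x, a, b, -, rfl⟩, -⟩, hc, hd⟩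
  · exact hy ((mem_rowSeg.mp hc).2.2.trans (mem_rowSeg.mp hd).2.2.symm)
  · exact hx ((mem_colSeg.mp hc).2.2.trans (mem_colSeg.mp hd).2.2.symm)

lemma IsMaxHInterval.attacks {y a b x₁ x₂ : ℤ} (hI : IsMaxHInterval P (rowSeg y a b))
    (h₁ : a ≤ x₁ ∧ x₁ ≤ b) (h₂ : a ≤ x₂ ∧ x₂ ≤ b) (hne : x₁ ≠ x₂) :
    Attacks P (x₁, y) (x₂, y) :=
  ⟨fun h => hne (congrArg Prod.fst h), _, .inl hI, mem_rowSeg.mpr ⟨h₁.1, h₁.2, rfl⟩,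
    mem_rowSeg.mpr ⟨h₂.1, h₂.2, rfl⟩⟩

lemma IsMaxVInterval.attacks {x a b y₁ y₂ : ℤ} (hI : IsMaxVInterval P (colSeg x a b))
    (h₁ : a ≤ y₁ ∧ y₁ ≤ b) (h₂ : a ≤ y₂ ∧ y₂ ≤ b) (hne : y₁ ≠ y₂) :
    Attacks P (x, y₁) (x, y₂) :=
  ⟨fun h => hne (congrArg Prod.snd h), _, .inr hI, mem_colSeg.mpr ⟨h₁.1, h₁.2, rfl⟩,
    mem_colSeg.mpr ⟨h₂.1, h₂.2, rfl⟩⟩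

/-- The union of the two intervals is again a horizontal segment inside `P`. -/
lemma IsMaxHInterval.eq_of_mem (hI : IsMaxHInterval P I) (hJ : IsMaxHInterval P J)
    (hcI : c ∈ I) (hcJ : c ∈ J) : I = J := by
  obtain ⟨⟨y, a, b, -, rfl⟩, hIP, hImax⟩ := hI
  obtain ⟨⟨y', a', b', -, rfl⟩, hJP, hJmax⟩ := hJ
  obtain ⟨hca, hcb, rfl⟩ := mem_rowSeg.mp hcI
  obtain ⟨hca', hcb', hy⟩ := mem_rowSeg.mp hcJ
  subst hy
  have hU : rowSeg c.2 (min a a') (max b b') ⊆ P := by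
    intro p hp
    obtain ⟨h₁, h₂, hp⟩ := mem_rowSeg.mp hp
    by_cases hpI : a ≤ p.1 ∧ p.1 ≤ b
    · exact hIP (mem_rowSeg.mpr ⟨hpI.1, hpI.2, hp⟩)
    · exact hJP (mem_rowSeg.mpr ⟨by omega, by omega, hp⟩)
  have hsub : ∀ {a₀ b₀}, min a a' ≤ a₀ → b₀ ≤ max b b' →
      rowSeg c.2 a₀ b₀ ⊆ rowSeg c.2 (min a a') (max b b') := fun h₁ h₂ p hp => by
    obtain ⟨h₃, h₄, hp⟩ := mem_rowSeg.mp hp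
    exact mem_rowSeg.mpr ⟨h₁.trans h₃, h₄.trans h₂, hp⟩
  rw [← hImax _ ⟨_, _, _, by omega, rfl⟩ hU (hsub (min_le_left _ _) (le_max_left _ _)),
    ← hJmax _ ⟨_, _, _, by omega, rfl⟩ hU (hsub (min_le_right _ _) (le_max_right _ _))]

lemma IsMaxHInterval.nonAttacking (hI : IsMaxHInterval P I) (hJ : IsMaxHInterval P J)
    (hIJ : I ≠ J) (hc : c ∈ I) (hd : d ∈ J) (hrow : c.2 = d.2) : NonAttacking P c d := by
  refine ⟨fun h => hIJ (hI.eq_of_mem hJ hc (h ▸ hd)), ?_⟩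
  rintro ⟨hne, K, hK | ⟨⟨x, a, b, -, rfl⟩, -⟩, hcK, hdK⟩
  · exact hIJ ((hK.eq_of_mem hI hcK hc).symm.trans (hK.eq_of_mem hJ hdK hd))
  · exact hne (Prod.ext ((mem_colSeg.mp hcK).2.2.trans (mem_colSeg.mp hdK).2.2.symm) hrow)

end Attacks

section Cycles

variable {P : Finset Cell}

lemma gBar_adj_mk {c d : Cell} {hc : c ∈ P} {hd : d ∈ P} :
    (GBar P).Adj ⟨c, hc⟩ ⟨d, hd⟩ ↔ NonAttacking P c d := by
  rw [GBar, SimpleGraph.compl_adj, ne_eq, Subtype.mk.injEq]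
  rfl

lemma hasInducedCycle_four_of_attacks {a₀ a₁ b₀ b₁ : Cell} (ha : Attacks P a₀ a₁)
    (hb : Attacks P b₀ b₁) (h₀₀ : NonAttacking P a₀ b₀) (h₀₁ : NonAttacking P a₀ b₁)
    (h₁₀ : NonAttacking P a₁ b₀) (h₁₁ : NonAttacking P a₁ b₁) :
    HasInducedCycle (GBar P) 4 :=
  hasInducedCycle_compl_four (G := GP P) (a := ![⟨a₀, ha.mem.1⟩, ⟨a₁, ha.mem.2⟩])
    (b := ![⟨b₀, hb.mem.1⟩, ⟨b₁, hb.mem.2⟩]) ha hb <| by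
    simp only [Fin.forall_fin_two, Matrix.cons_val_zero, Matrix.cons_val_one]
    exact ⟨⟨gBar_adj_mk.2 h₀₀, gBar_adj_mk.2 h₀₁⟩, gBar_adj_mk.2 h₁₀, gBar_adj_mk.2 h₁₁⟩

lemma hasInducedCycle_six_of_attacks {a b : Fin 3 → Cell}
    (ha : ∀ i j, i ≠ j → Attacks P (a i) (a j)) (hb : ∀ i j, i ≠ j → Attacks P (b i) (b j))
    (hab : ∀ i, Attacks P (a i) (b i)) (hab' : ∀ i j, i ≠ j → NonAttacking P (a i) (b j)) :
    HasInducedCycle (GBar P) 6 :=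
  hasInducedCycle_compl_six (G := GP P) (a := fun i => ⟨a i, (hab i).mem.1⟩)
    (b := fun i => ⟨b i, (hab i).mem.2⟩) ha hb hab fun i j hij =>
    gBar_adj_mk.2 (hab' i j hij)

end Cycles

section Configurations

variable {P I J : Finset Cell}

lemma hasInducedCycle_four_of_long_row_col (hJ : IsMaxHInterval P J) (hI : IsMaxVInterval P I)
    (hJ3 : 3 ≤ J.card) (hI3 : 3 ≤ I.card) : HasInducedCycle (GBar P) 4 := by
  obtain ⟨y, a, b, -, rfl⟩ := hJ.1
  obtain ⟨x, c, d, -, rfl⟩ := hI.1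
  rw [card_rowSeg] at hJ3
  rw [card_colSeg] at hI3
  obtain ⟨u₁, u₂, hu⟩ := exists_two_ne (by omega : a + 2 ≤ b) x
  obtain ⟨v₁, v₂, hv⟩ := exists_two_ne (by omega : c + 2 ≤ d) y
  exact hasInducedCycle_four_of_attacks (a₀ := (u₁, y)) (a₁ := (u₂, y)) (b₀ := (x, v₁))
    (b₁ := (x, v₂)) (hJ.attacks (by omega) (by omega) (by omega))
    (hI.attacks (by omega) (by omega) (by omega))
    (nonAttacking_of_ne_of_ne (by omega) (by omega))
    (nonAttacking_of_ne_of_ne (by omega) (by omega))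
    (nonAttacking_of_ne_of_ne (by omega) (by omega))
    (nonAttacking_of_ne_of_ne (by omega) (by omega))

lemma hasInducedCycle_four_of_same_row {y a b a' b' : ℤ} (hJ : IsMaxHInterval P (rowSeg y a b))
    (hI : IsMaxHInterval P (rowSeg y a' b')) (hIJ : rowSeg y a' b' ≠ rowSeg y a b)
    (hab : a < b) (hab' : a' < b') : HasInducedCycle (GBar P) 4 := by
  have hcross : ∀ {u v}, a ≤ u ∧ u ≤ b → a' ≤ v ∧ v ≤ b' → NonAttacking P (u, y) (v, y) :=
    fun hu hv => hJ.nonAttacking hI hIJ.symm (mem_rowSeg.mpr ⟨hu.1, hu.2, rfl⟩)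
      (mem_rowSeg.mpr ⟨hv.1, hv.2, rfl⟩) rfl
  exact hasInducedCycle_four_of_attacks (a₀ := (a, y)) (a₁ := (a + 1, y)) (b₀ := (a', y))
    (b₁ := (a' + 1, y)) (hJ.attacks (by omega) (by omega) (by omega))
    (hI.attacks (by omega) (by omega) (by omega))
    (hcross (by omega) (by omega)) (hcross (by omega) (by omega))
    (hcross (by omega) (by omega)) (hcross (by omega) (by omega))

lemma hasInducedCycle_four_of_rows {y y' a b a' b' : ℤ} (hJ : IsMaxHInterval P (rowSeg y a b))
    (hI : IsMaxHInterval P (rowSeg y' a' b')) (hy : y ≠ y') (hab : a + 2 ≤ b)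
    (hab' : a' + 2 ≤ b') (hcols : ¬ (a = a' ∧ b = b' ∧ b = a + 2)) :
    HasInducedCycle (GBar P) 4 := by
  obtain ⟨u₁, u₂, v₁, v₂, h⟩ : ∃ u₁ u₂ v₁ v₂ : ℤ, a ≤ u₁ ∧ u₁ < u₂ ∧ u₂ ≤ b ∧
      a' ≤ v₁ ∧ v₁ < v₂ ∧ v₂ ≤ b' ∧ u₁ ≠ v₁ ∧ u₁ ≠ v₂ ∧ u₂ ≠ v₁ ∧ u₂ ≠ v₂ := by
    rcases lt_trichotomy a a' with h | rfl | h
    · exact ⟨a, a + 1, b' - 1, b', by omega⟩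
    · rcases lt_trichotomy b b' with h' | rfl | h'
      · exact ⟨a, a + 1, b' - 1, b', by omega⟩
      · exact ⟨a, a + 1, a + 2, a + 3, by omega⟩
      · exact ⟨b - 1, b, a, a + 1, by omega⟩
    · exact ⟨b - 1, b, a', a' + 1, by omega⟩
  exact hasInducedCycle_four_of_attacks (a₀ := (u₁, y)) (a₁ := (u₂, y)) (b₀ := (v₁, y'))
    (b₁ := (v₂, y')) (hJ.attacks (by omega) (by omega) (by omega))
    (hI.attacks (by omega) (by omega) (by omega))
    (nonAttacking_of_ne_of_ne (by omega) hy) (nonAttacking_of_ne_of_ne (by omega) hy)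
    (nonAttacking_of_ne_of_ne (by omega) hy) (nonAttacking_of_ne_of_ne (by omega) hy)

lemma hasInducedCycle_of_rows_over_three_cols {y y' a : ℤ}
    (hJ : IsMaxHInterval P (rowSeg y a (a + 2))) (hI : IsMaxHInterval P (rowSeg y' a (a + 2)))
    (hy : y ≠ y') : HasInducedCycle (GBar P) 4 ∨ HasInducedCycle (GBar P) 6 := by
  by_cases hcols : ∀ u, a ≤ u ∧ u ≤ a + 2 → Attacks P (u, y) (u, y')
  · right
    have hmem : ∀ i : Fin 3, a ≤ a + (i : ℕ) ∧ a + (i : ℕ) ≤ a + 2 := fun i => by omega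
    have hne : ∀ i j : Fin 3, i ≠ j → a + (i : ℕ) ≠ a + (j : ℕ) := fun i j hij => by
      have := Fin.val_injective.ne hij
      omega
    exact hasInducedCycle_six_of_attacks (a := fun i => (a + (i : ℕ), y))
      (b := fun i => (a + (i : ℕ), y'))
      (fun i j hij => hJ.attacks (hmem i) (hmem j) (hne i j hij))
      (fun i j hij => hI.attacks (hmem i) (hmem j) (hne i j hij))
      (fun i => hcols _ (hmem i)) (fun i j hij => nonAttacking_of_ne_of_ne (hne i j hij) hy)
  · left
    push Not at hcols
    obtain ⟨u, hu, hnot⟩ := hcols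
    obtain ⟨p, q, hpq⟩ := exists_two_ne (le_refl (a + 2)) u
    exact hasInducedCycle_four_of_attacks (a₀ := (u, y)) (a₁ := (p, y)) (b₀ := (u, y'))
      (b₁ := (q, y')) (hJ.attacks hu (by omega) (by omega))
      (hI.attacks hu (by omega) (by omega))
      ⟨fun h => hy (congrArg Prod.snd h), hnot⟩ (nonAttacking_of_ne_of_ne (by omega) hy)
      (nonAttacking_of_ne_of_ne (by omega) hy) (nonAttacking_of_ne_of_ne (by omega) hy)

lemma hasInducedCycle_of_long_rows (hJ : IsMaxHInterval P J) (hI : IsMaxHInterval P I)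
    (hIJ : I ≠ J) (hJ3 : 3 ≤ J.card) (hI3 : 3 ≤ I.card) :
    HasInducedCycle (GBar P) 4 ∨ HasInducedCycle (GBar P) 6 := by
  obtain ⟨y, a, b, -, rfl⟩ := hJ.1
  obtain ⟨y', a', b', -, rfl⟩ := hI.1
  rw [card_rowSeg] at hJ3 hI3
  obtain rfl | hy := eq_or_ne y y'
  · exact .inl (hasInducedCycle_four_of_same_row hJ hI hIJ (by omega) (by omega))
  by_cases hcols : a = a' ∧ b = b' ∧ b = a + 2
  · obtain ⟨rfl, rfl, rfl⟩ := hcols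
    exact hasInducedCycle_of_rows_over_three_cols hJ hI hy
  · exact .inl (hasInducedCycle_four_of_rows hJ hI hy (by omega) (by omega) hcols)

end Configurations

section Transpose

variable {P I S : Finset Cell} {c d : Cell}

lemma image_swap_image_swap (S : Finset Cell) : (S.image Prod.swap).image Prod.swap = S := by
  simp [image_image]

lemma image_swap_subset_comm {T : Finset Cell} : S.image Prod.swap ⊆ T ↔ S ⊆ T.image Prod.swap :=
  ⟨fun h => by simpa [image_swap_image_swap] using image_subset_image (f := Prod.swap) h,
    fun h => by simpa [image_swap_image_swap] using image_subset_image (f := Prod.swap) h⟩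

lemma IsHSeg.image_swap (h : IsHSeg S) : IsVSeg (S.image Prod.swap) := by
  obtain ⟨y, a, b, hab, rfl⟩ := h
  exact ⟨y, a, b, hab, by rw [image_image]; rfl⟩

lemma IsVSeg.image_swap (h : IsVSeg S) : IsHSeg (S.image Prod.swap) := by
  obtain ⟨x, a, b, hab, rfl⟩ := h
  exact ⟨x, a, b, hab, by rw [image_image]; rfl⟩

lemma IsMaxHInterval.image_swap (h : IsMaxHInterval P I) :
    IsMaxVInterval (P.image Prod.swap) (I.image Prod.swap) := by
  obtain ⟨hseg, hIP, hmax⟩ := h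
  refine ⟨hseg.image_swap, image_subset_image hIP, fun K hK hKP hIK => ?_⟩
  rw [← hmax _ hK.image_swap (image_swap_subset_comm.2 hKP) (image_swap_subset_comm.1 hIK),
    image_swap_image_swap]

lemma IsMaxVInterval.image_swap (h : IsMaxVInterval P I) :
    IsMaxHInterval (P.image Prod.swap) (I.image Prod.swap) := by
  obtain ⟨hseg, hIP, hmax⟩ := h
  refine ⟨hseg.image_swap, image_subset_image hIP, fun K hK hKP hIK => ?_⟩
  rw [← hmax _ hK.image_swap (image_swap_subset_comm.2 hKP) (image_swap_subset_comm.1 hIK),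
    image_swap_image_swap]

lemma Attacks.image_swap (h : Attacks P c d) : Attacks (P.image Prod.swap) c.swap d.swap := by
  obtain ⟨hne, K, hK, hc, hd⟩ := h
  refine ⟨fun h => hne (Prod.swap_injective h), K.image Prod.swap, ?_,
    mem_image_of_mem _ hc, mem_image_of_mem _ hd⟩
  rcases hK with hK | hK
  exacts [.inr hK.image_swap, .inl hK.image_swap]

def gBarImageSwapEmbedding (P : Finset Cell) : GBar (P.image Prod.swap) ↪g GBar P :=
  SimpleGraph.Embedding.complEquiv
    { toFun := fun c =>
        ⟨c.1.swap, by simpa [image_swap_image_swap] using mem_image_of_mem Prod.swap c.2⟩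
      inj' := fun c d h => Subtype.ext (Prod.swap_injective (congrArg Subtype.val h))
      map_rel_iff' := fun {c d} => by
        change Attacks P c.1.swap d.1.swap ↔ Attacks (P.image Prod.swap) c.1 d.1
        exact ⟨fun h => by simpa using h.image_swap,
          fun h => by simpa [image_swap_image_swap] using h.image_swap⟩ }

end Transpose

lemma hasInducedCycle_of_long_cols {P J I : Finset Cell} (hJ : IsMaxVInterval P J)
    (hI : IsMaxVInterval P I) (hIJ : I ≠ J) (hJ3 : 3 ≤ J.card) (hI3 : 3 ≤ I.card) :
    HasInducedCycle (GBar P) 4 ∨ HasInducedCycle (GBar P) 6 := by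
  have hcard : ∀ S : Finset Cell, (S.image Prod.swap).card = S.card :=
    fun S => card_image_of_injective S Prod.swap_injective
  exact (hasInducedCycle_of_long_rows hJ.image_swap hI.image_swap
    (fun h => hIJ (image_injective Prod.swap_injective h)) (hcard J ▸ hJ3)
    (hcard I ▸ hI3)).imp (·.map (gBarImageSwapEmbedding P)) (·.map (gBarImageSwapEmbedding P))

theorem statement8_general (P : Finset Cell)
    (hch : IsChordal (GBar P))
    (J : Finset Cell) (hJ : IsMaxInterval P J) (hJ3 : 3 ≤ J.card)
    (I : Finset Cell) (hI : IsMaxInterval P I) (hIJ : I ≠ J) :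
    I.card ≤ 2 := by
  by_contra! hI3
  have hcycle : HasInducedCycle (GBar P) 4 ∨ HasInducedCycle (GBar P) 6 := by
    rcases hJ with hJ | hJ <;> rcases hI with hI | hI
    · exact hasInducedCycle_of_long_rows hJ hI hIJ hJ3 hI3
    · exact .inl (hasInducedCycle_four_of_long_row_col hJ hI hJ3 hI3)
    · exact .inl (hasInducedCycle_four_of_long_row_col hI hJ hI3 hJ3)
    · exact hasInducedCycle_of_long_cols hJ hI hIJ hJ3 hI3
  rcases hcycle with h | h
  exacts [hch 4 le_rfl h, hch 6 (by norm_num) h]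

/-- If `Ḡ_P` is chordal and `J` is a maximal interval with at least 3 cells,
then every other maximal interval has at most 2 cells. -/
theorem statement8 (P : Finset Cell) (hP : IsPolyomino P)
    (hch : IsChordal (GBar P))
    (J : Finset Cell) (hJ : IsMaxInterval P J) (hJ3 : 3 ≤ J.card)
    (I : Finset Cell) (hI : IsMaxInterval P I) (hIJ : I ≠ J) :
    I.card ≤ 2 :=
  statement8_general P hch J hJ hJ3 I hI hIJ
end

section
/- Let P be a pure brush polyomino with handle J, |J| = d, and bristles I_1,…,I_d with ℓ_k = |I_k| ≥ 2 for all k, and let t = #{k : ℓ_k ≥ 3}. Then the induced matching number of G_P equals min(t+1, d). Moreover, defining h_s = Σ_{i=0}^{s} (−1)^{s−i} · binom(d−i, s−i) · f_{i−1} where f_{i−1} is the number of i-element sets of pairwise non-attacking cells of P (f_{−1} = 1), one has h_s = 0 for every s with min(t+1, d) < s ≤ d. -/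
/-!
Two distinct cells of a pure brush attack each other exactly when both lie on the handle or both
lie on one bristle: a maximal interval parallel to the handle but off it would contain two adjacent
cells whose bristles, followed back to the handle, contain a `2 × 2` square.

Hence the edges of an induced matching lie in distinct bristles, at most one of them touches the
handle, and each of the others uses two non-handle cells of its bristle, which therefore has at
least three cells; this gives `ν(G_P) ≤ min (t + 1) d`, and choosing such edges realises the bound.

A rook set meets every bristle at most once, so counting pairs `(F, T)` of a rook set `F` and an
`s`-set `T` of bristles containing the bristles met by `F` rewrites `h_s` as
`(-1)^s ∑_T ∑_F (-1)^|F|`, the inner sum running over the rook sets inside the bristles of `T`.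
For `s > t + 1` every such `T` contains two bristles with two cells, and then each inner sum
vanishes by a sign-reversing involution.
-/

open Finset

theorem IsHSeg.snd_eq {S : Finset Cell} (hS : IsHSeg S) {c e : Cell} (hc : c ∈ S) (he : e ∈ S) :
    c.2 = e.2 := by
  obtain ⟨y, a, b, -, rfl⟩ := hS
  simp only [mem_image] at hc he
  obtain ⟨x, -, rfl⟩ := hc
  obtain ⟨x', -, rfl⟩ := he
  rfl

theorem IsVSeg.fst_eq {S : Finset Cell} (hS : IsVSeg S) {c e : Cell} (hc : c ∈ S) (he : e ∈ S) :
    c.1 = e.1 := by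
  obtain ⟨x, a, b, -, rfl⟩ := hS
  simp only [mem_image] at hc he
  obtain ⟨y, -, rfl⟩ := hc
  obtain ⟨y', -, rfl⟩ := he
  rfl

theorem IsVSeg.mem_of_between {S : Finset Cell} (hS : IsVSeg S) {c e : Cell} (hc : c ∈ S)
    (he : e ∈ S) {z : ℤ} (hcz : min c.2 e.2 ≤ z) (hze : z ≤ max c.2 e.2) : (c.1, z) ∈ S := by
  obtain ⟨x, a, b, -, rfl⟩ := hS
  simp only [mem_image, mem_Icc] at hc he ⊢
  obtain ⟨y, hy, rfl⟩ := hc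
  obtain ⟨y', hy', rfl⟩ := he
  exact ⟨z, by dsimp at *; omega, rfl⟩

theorem IsHSeg.exists_adjacent {S : Finset Cell} (hS : IsHSeg S) {c e : Cell} (hc : c ∈ S)
    (he : e ∈ S) (hce : c ≠ e) : ∃ x y, (x, y) ∈ S ∧ (x + 1, y) ∈ S := by
  obtain ⟨y, a, b, -, rfl⟩ := hS
  simp only [mem_image, mem_Icc] at hc he
  obtain ⟨x, hx, rfl⟩ := hc
  obtain ⟨x', hx', rfl⟩ := he
  have hxx' : x ≠ x' := fun h => hce (by rw [h])
  exact ⟨a, y, mem_image_of_mem _ (mem_Icc.2 ⟨le_rfl, by omega⟩),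
    mem_image_of_mem _ (mem_Icc.2 ⟨by omega, by omega⟩)⟩

def transpose (S : Finset Cell) : Finset Cell := S.image Prod.swap

@[simp] theorem mem_transpose {S : Finset Cell} {c : Cell} : c ∈ transpose S ↔ c.swap ∈ S :=
  ⟨fun h => by obtain ⟨e, he, rfl⟩ := mem_image.1 h; exact he,
    fun h => mem_image.2 ⟨c.swap, h, c.swap_swap⟩⟩

@[simp] theorem transpose_transpose (S : Finset Cell) : transpose (transpose S) = S := by
  ext; simp

theorem transpose_injective : Function.Injective transpose :=
  Function.LeftInverse.injective transpose_transpose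

theorem transpose_subset_transpose {A B : Finset Cell} : transpose A ⊆ transpose B ↔ A ⊆ B :=
  image_subset_image_iff Prod.swap_injective

theorem isVSeg_transpose {S : Finset Cell} : IsVSeg (transpose S) ↔ IsHSeg S := by
  constructor
  · rintro ⟨x, a, b, hab, hS⟩
    refine ⟨x, a, b, hab, ?_⟩
    rw [← transpose_transpose S, hS, transpose, image_image]
    rfl
  · rintro ⟨y, a, b, hab, rfl⟩
    exact ⟨y, a, b, hab, by rw [transpose, image_image]; rfl⟩

theorem isHSeg_transpose {S : Finset Cell} : IsHSeg (transpose S) ↔ IsVSeg S := by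
  rw [← isVSeg_transpose, transpose_transpose]

theorem IsVSeg.union {A B : Finset Cell} (hA : IsVSeg A) (hB : IsVSeg B) {c : Cell}
    (hcA : c ∈ A) (hcB : c ∈ B) : IsVSeg (A ∪ B) := by
  obtain ⟨x, a, b, hab, rfl⟩ := hA
  obtain ⟨x', a', b', -, rfl⟩ := hB
  simp only [mem_image, mem_Icc] at hcA hcB
  obtain ⟨y, hy, rfl⟩ := hcA
  obtain ⟨y', hy', hc⟩ := hcB
  obtain ⟨rfl, rfl⟩ := Prod.mk.inj hc
  refine ⟨x', min a a', max b b', by omega, ?_⟩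
  ext ⟨u, v⟩
  simp only [mem_union, mem_image, mem_Icc, Prod.mk.injEq]
  constructor
  · rintro (⟨z, hz, rfl, rfl⟩ | ⟨z, hz, rfl, rfl⟩) <;> exact ⟨z, by omega, rfl, rfl⟩
  · rintro ⟨z, hz, rfl, rfl⟩
    by_cases hza : a ≤ z ∧ z ≤ b
    · exact Or.inl ⟨z, hza, rfl, rfl⟩
    · exact Or.inr ⟨z, by omega, rfl, rfl⟩

theorem IsHSeg.union {A B : Finset Cell} (hA : IsHSeg A) (hB : IsHSeg B) {c : Cell}
    (hcA : c ∈ A) (hcB : c ∈ B) : IsHSeg (A ∪ B) := by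
  rw [← isVSeg_transpose] at hA hB ⊢
  rw [transpose, image_union]
  exact hA.union hB (c := c.swap) (by simpa using hcA) (by simpa using hcB)

theorem IsMaxHInterval.eq_of_mem_s18 {P A B : Finset Cell} (hA : IsMaxHInterval P A)
    (hB : IsMaxHInterval P B) {c : Cell} (hcA : c ∈ A) (hcB : c ∈ B) : A = B := by
  have hU := hA.1.union hB.1 hcA hcB
  have hUP := union_subset hA.2.1 hB.2.1
  rw [← hA.2.2 _ hU hUP subset_union_left, hB.2.2 _ hU hUP subset_union_right]

theorem IsMaxVInterval.eq_of_mem_s18 {P A B : Finset Cell} (hA : IsMaxVInterval P A)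
    (hB : IsMaxVInterval P B) {c : Cell} (hcA : c ∈ A) (hcB : c ∈ B) : A = B := by
  have hU := hA.1.union hB.1 hcA hcB
  have hUP := union_subset hA.2.1 hB.2.1
  rw [← hA.2.2 _ hU hUP subset_union_left, hB.2.2 _ hU hUP subset_union_right]

theorem card_inter_le_one_of_isVSeg_of_isHSeg {A B : Finset Cell} (hA : IsVSeg A) (hB : IsHSeg B) :
    (A ∩ B).card ≤ 1 :=
  card_le_one.2 fun _ hu _ hv => Prod.ext (hA.fst_eq (mem_inter.1 hu).1 (mem_inter.1 hv).1)
    (hB.snd_eq (mem_inter.1 hu).2 (mem_inter.1 hv).2)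

theorem isMaxVInterval_transpose {P S : Finset Cell} :
    IsMaxVInterval (transpose P) (transpose S) ↔ IsMaxHInterval P S := by
  refine and_congr isVSeg_transpose (and_congr transpose_subset_transpose ⟨fun h I' hI' hP hS => ?_,
    fun h I' hI' hP hS => ?_⟩)
  · exact transpose_injective (h _ (isVSeg_transpose.2 hI') (transpose_subset_transpose.2 hP)
      (transpose_subset_transpose.2 hS))
  · rw [← transpose_transpose I'] at hP hS ⊢
    rw [transpose_subset_transpose] at hP hS
    rw [h _ (isHSeg_transpose.2 hI') hP hS]

theorem isMaxHInterval_transpose {P S : Finset Cell} :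
    IsMaxHInterval (transpose P) (transpose S) ↔ IsMaxVInterval P S := by
  rw [← isMaxVInterval_transpose, transpose_transpose, transpose_transpose]

theorem IsMaxInterval.transpose {P S : Finset Cell} (h : IsMaxInterval P S) :
    IsMaxInterval (transpose P) (transpose S) :=
  h.symm.imp isMaxHInterval_transpose.2 isMaxVInterval_transpose.2

theorem Attacks.transpose {P : Finset Cell} {c e : Cell} (h : Attacks P c e) :
    Attacks (transpose P) c.swap e.swap := by
  obtain ⟨hce, S, hS, hc, he⟩ := h
  exact ⟨Prod.swap_injective.ne hce, _root_.transpose S, hS.transpose, by simpa, by simpa⟩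

theorem IsThin.transpose {P : Finset Cell} (h : IsThin P) : IsThin (transpose P) := by
  rintro ⟨⟨x, y⟩, hsq⟩
  refine h ⟨(y, x), ?_⟩
  simp only [insert_subset_iff, singleton_subset_iff, mem_transpose, Prod.swap_prod_mk] at hsq ⊢
  tauto

structure IsHorizontalBrush (P J : Finset Cell) {d : ℕ} (I : Fin d → Finset Cell) : Prop where
  thin : IsThin P
  handle : IsMaxHInterval P J
  bristle : ∀ k, IsMaxVInterval P (I k)
  meet : ∀ k, (I k ∩ J).Nonempty
  cover : univ.biUnion I = P

namespace IsHorizontalBrush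

variable {P J : Finset Cell} {d : ℕ} {I : Fin d → Finset Cell}

theorem exists_mem_bristle (hB : IsHorizontalBrush P J I) {c : Cell} (hc : c ∈ P) :
    ∃ k, c ∈ I k := by
  simpa [← hB.cover] using hc

/-- Otherwise the two columns through these cells, followed back to the handle row, would contain
a `2 × 2` square. -/
theorem mem_handle_of_adjacent (hB : IsHorizontalBrush P J I) {x y : ℤ} (h₀ : (x, y) ∈ P)
    (h₁ : (x + 1, y) ∈ P) : (x, y) ∈ J := by
  obtain ⟨k₀, hk₀⟩ := hB.exists_mem_bristle h₀
  obtain ⟨k₁, hk₁⟩ := hB.exists_mem_bristle h₁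
  obtain ⟨m₀, hm₀⟩ := hB.meet k₀
  obtain ⟨m₁, hm₁⟩ := hB.meet k₁
  rw [mem_inter] at hm₀ hm₁
  have hx₀ : m₀.1 = x := (hB.bristle k₀).1.fst_eq hm₀.1 hk₀
  have hx₁ : m₁.1 = x + 1 := (hB.bristle k₁).1.fst_eq hm₁.1 hk₁
  have hrow : m₁.2 = m₀.2 := hB.handle.1.snd_eq hm₁.2 hm₀.2
  have hcol₀ : ∀ z, min y m₀.2 ≤ z → z ≤ max y m₀.2 → (x, z) ∈ P := fun z h h' =>
    (hB.bristle k₀).2.1 ((hB.bristle k₀).1.mem_of_between hk₀ hm₀.1 h h')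
  have hcol₁ : ∀ z, min y m₀.2 ≤ z → z ≤ max y m₀.2 → (x + 1, z) ∈ P := fun z h h' =>
    (hB.bristle k₁).2.1 ((hB.bristle k₁).1.mem_of_between hk₁ hm₁.1 (hrow ▸ h) (hrow ▸ h'))
  have hy : y = m₀.2 := by
    by_contra hne
    refine hB.thin ⟨(x, min y m₀.2), ?_⟩
    simp only [insert_subset_iff, singleton_subset_iff]
    exact ⟨hcol₀ _ le_rfl (by omega), hcol₁ _ le_rfl (by omega),
      hcol₀ _ (by omega) (by omega), hcol₁ _ (by omega) (by omega)⟩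
  rw [hy, ← hx₀]
  exact hm₀.2

theorem mem_handle_or_mem_bristle_of_attacks (hB : IsHorizontalBrush P J I) {c e : Cell}
    (h : Attacks P c e) : (c ∈ J ∧ e ∈ J) ∨ ∃ k, c ∈ I k ∧ e ∈ I k := by
  obtain ⟨hce, S, hS | hS, hc, he⟩ := h
  · obtain ⟨x, y, h₀, h₁⟩ := hS.1.exists_adjacent hc he hce
    obtain rfl := hS.eq_of_mem_s18 hB.handle h₀
      (hB.mem_handle_of_adjacent (hS.2.1 h₀) (hS.2.1 h₁))
    exact Or.inl ⟨hc, he⟩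
  · obtain ⟨k, hk⟩ := hB.exists_mem_bristle (hS.2.1 hc)
    obtain rfl := hS.eq_of_mem_s18 (hB.bristle k) hc hk
    exact Or.inr ⟨k, hc, he⟩

theorem of_transpose (hthin : IsThin P) (hJ : IsMaxVInterval P J)
    (hI : ∀ k, IsMaxHInterval P (I k)) (hmeet : ∀ k, (I k ∩ J).Nonempty)
    (hcover : univ.biUnion I = P) :
    IsHorizontalBrush (transpose P) (transpose J) (fun k => transpose (I k)) where
  thin := hthin.transpose
  handle := isMaxHInterval_transpose.2 hJ
  bristle k := isMaxVInterval_transpose.2 (hI k)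
  meet k := by
    obtain ⟨m, hm⟩ := hmeet k
    exact ⟨m.swap, by simpa using hm⟩
  cover := by rw [← hcover, transpose, biUnion_image]; rfl

end IsHorizontalBrush

theorem Attacks.symm {P : Finset Cell} {c e : Cell} (h : Attacks P c e) : Attacks P e c :=
  ⟨h.1.symm, h.2.imp fun _ hS => ⟨hS.1, hS.2.2, hS.2.1⟩⟩

theorem Attacks.left_mem {P : Finset Cell} {c e : Cell} (h : Attacks P c e) : c ∈ P := by
  obtain ⟨-, S, hS | hS, hc, -⟩ := h <;> exact hS.2.1 hc

def longBristles {d : ℕ} (I : Fin d → Finset Cell) : Finset (Fin d) :=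
  univ.filter fun k => 3 ≤ (I k).card

theorem Finset.sum_eq_zero_of_insert_erase_mem {α M : Type*} [DecidableEq α] [AddCommGroup M]
    {D : Finset (Finset α)} {f : Finset α → M} (x : α) (hins : ∀ F ∈ D, insert x F ∈ D)
    (herase : ∀ F ∈ D, F.erase x ∈ D) (hf : ∀ F ∈ D, x ∉ F → f (insert x F) = -f F) :
    ∑ F ∈ D, f F = 0 := by
  refine sum_involution (fun F _ => if x ∈ F then F.erase x else insert x F) (fun F hF => ?_)
    (fun F _ _ => ?_) (fun F hF => ?_) (fun F _ => ?_) <;> by_cases hx : x ∈ F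
  · have := hf _ (herase F hF) (notMem_erase x F)
    rw [insert_erase hx] at this
    rw [if_pos hx, this, neg_add_cancel]
  · rw [if_neg hx, hf F hF hx, add_neg_cancel]
  · simp [hx]
  · simp [hx]
  · simpa [hx] using herase F hF
  · simpa [hx] using hins F hF
  · simp [hx, insert_erase]
  · simp [hx]

theorem IsRookSet.mono {P F G : Finset Cell} (hF : IsRookSet P F) (hGF : G ⊆ F) : IsRookSet P G :=
  ⟨hGF.trans hF.1, fun c hc e he => hF.2 c (hGF hc) e (hGF he)⟩

open Classical in
noncomputable def rookSets (P : Finset Cell) : Finset (Finset Cell) :=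
  P.powerset.filter (IsRookSet P)

theorem mem_rookSets {P F : Finset Cell} : F ∈ rookSets P ↔ IsRookSet P F := by
  simpa [rookSets] using fun h : IsRookSet P F => h.1

theorem ncard_rookSets_of_card (P : Finset Cell) (i : ℕ) :
    {F : Finset Cell | F.card = i ∧ IsRookSet P F}.ncard =
      ((rookSets P).filter (·.card = i)).card := by
  rw [← Set.ncard_coe_finset]
  congr
  ext F
  simp [mem_rookSets, and_comm]

def bristleSupport {d : ℕ} (I : Fin d → Finset Cell) (F : Finset Cell) : Finset (Fin d) :=
  univ.filter fun k => (F ∩ I k).Nonempty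

namespace IsPureBrush

variable {P J : Finset Cell} {d : ℕ} {I : Fin d → Finset Cell}

theorem attacks_iff (h : IsPureBrush P J d I) {c e : Cell} :
    Attacks P c e ↔ c ≠ e ∧ ((c ∈ J ∧ e ∈ J) ∨ ∃ k, c ∈ I k ∧ e ∈ I k) := by
  obtain ⟨-, -, hthin, -, horient, -, hmeet, hcover⟩ := h
  refine ⟨fun hatt => ⟨hatt.1, ?_⟩, ?_⟩
  · rcases horient with ⟨hJ, hI⟩ | ⟨hJ, hI⟩
    · exact (IsHorizontalBrush.mk hthin hJ hI hmeet hcover).mem_handle_or_mem_bristle_of_attacks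
        hatt
    · have hB := IsHorizontalBrush.of_transpose hthin hJ hI hmeet hcover
      simpa using hB.mem_handle_or_mem_bristle_of_attacks hatt.transpose
  · rintro ⟨hce, ⟨hc, he⟩ | ⟨k, hc, he⟩⟩
    · exact ⟨hce, J, horient.imp (·.1) (·.1), hc, he⟩
    · exact ⟨hce, I k, horient.symm.imp (·.2 k) (·.2 k), hc, he⟩

theorem bristle_subset (h : IsPureBrush P J d I) (k : Fin d) : I k ⊆ P := by
  obtain ⟨-, -, -, -, -, -, -, hcover⟩ := h
  exact hcover ▸ subset_biUnion_of_mem I (mem_univ k)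

theorem exists_mem_bristle (h : IsPureBrush P J d I) {c : Cell} (hc : c ∈ P) : ∃ k, c ∈ I k := by
  obtain ⟨-, -, -, -, -, -, -, hcover⟩ := h
  simpa [← hcover] using hc

theorem eq_of_mem_bristle (h : IsPureBrush P J d I) {c : Cell} {j k : Fin d} (hj : c ∈ I j)
    (hk : c ∈ I k) : j = k := by
  obtain ⟨-, -, -, -, -, hdisj, -, -⟩ := h
  by_contra hjk
  exact disjoint_left.1 (hdisj j k hjk) hj hk

theorem attacks_iff_of_ne (h : IsPureBrush P J d I) {c e : Cell} {i j : Fin d} (hc : c ∈ I i)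
    (he : e ∈ I j) (hij : i ≠ j) : Attacks P c e ↔ c ∈ J ∧ e ∈ J := by
  rw [h.attacks_iff]
  refine ⟨fun ⟨_, hce⟩ => hce.resolve_right ?_, fun hce => ⟨?_, Or.inl hce⟩⟩
  · rintro ⟨k, hck, hek⟩
    exact hij ((h.eq_of_mem_bristle hc hck).trans (h.eq_of_mem_bristle hek he))
  · rintro rfl
    exact hij (h.eq_of_mem_bristle hc he)

theorem card_inter_handle (h : IsPureBrush P J d I) (k : Fin d) : (I k ∩ J).card = 1 := by
  obtain ⟨-, -, -, -, horient, -, hmeet, -⟩ := h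
  refine le_antisymm ?_ (hmeet k).card_pos
  rcases horient with ⟨hJ, hI⟩ | ⟨hJ, hI⟩
  · exact card_inter_le_one_of_isVSeg_of_isHSeg (hI k).1 hJ.1
  · rw [inter_comm]
    exact card_inter_le_one_of_isVSeg_of_isHSeg hJ.1 (hI k).1

theorem card_sdiff_handle_add_one (h : IsPureBrush P J d I) (k : Fin d) :
    (I k \ J).card + 1 = (I k).card := by
  rw [← h.card_inter_handle k, card_sdiff_add_card_inter]

theorem two_le_card_sdiff_handle_iff (h : IsPureBrush P J d I) {k : Fin d} :
    2 ≤ (I k \ J).card ↔ k ∈ longBristles I := by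
  have := h.card_sdiff_handle_add_one k
  simp only [longBristles, mem_filter, mem_univ, true_and]
  omega

theorem hasInducedMatching (h : IsPureBrush P J d I) (S : Finset (Fin d)) {A B : Fin d → Cell}
    (hA : ∀ k, A k ∈ I k) (hB : ∀ k, B k ∈ I k \ J) (hAB : ∀ k, A k ≠ B k)
    (hAJ : ∀ i ∈ S, ∀ j ∈ S, A i ∈ J → A j ∈ J → i = j) : HasInducedMatching P S.card := by
  set e : Fin S.card → Fin d := fun i => S.equivFin.symm i
  have he : ∀ {i j}, i ≠ j → e i ≠ e j := fun hij =>
    Subtype.val_injective.ne (S.equivFin.symm.injective.ne hij)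
  have hBI : ∀ k, B k ∈ I k := fun k => (mem_sdiff.1 (hB k)).1
  have hBJ : ∀ k, B k ∉ J := fun k => (mem_sdiff.1 (hB k)).2
  refine ⟨fun i => A (e i), fun i => B (e i),
    fun i => h.attacks_iff.2 ⟨hAB _, Or.inr ⟨_, hA _, hBI _⟩⟩,
    fun i j hij (hA' : A (e i) = A (e j)) => he hij (h.eq_of_mem_bristle (hA _) (hA' ▸ hA _)),
    fun i j hij (hB' : B (e i) = B (e j)) => he hij (h.eq_of_mem_bristle (hBI _) (hB' ▸ hBI _)),
    fun i j (hAB' : A (e i) = B (e j)) => ?_, fun i j hij => ?_⟩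
  · obtain hij := h.eq_of_mem_bristle (hA (e i)) (hAB' ▸ hBI (e j))
    exact hAB (e i) (hij ▸ hAB')
  · have hne := he hij
    refine ⟨fun hatt => hne ?_,
      fun hatt => hBJ _ ((h.attacks_iff_of_ne (hA _) (hBI _) hne).1 hatt).2,
      fun hatt => hBJ _ ((h.attacks_iff_of_ne (hBI _) (hBI _) hne).1 hatt).1⟩
    obtain ⟨hi, hj⟩ := (h.attacks_iff_of_ne (hA _) (hA _) hne).1 hatt
    exact hAJ _ (S.equivFin.symm i).2 _ (S.equivFin.symm j).2 hi hj

theorem hasInducedMatching_min (h : IsPureBrush P J d I) (hl : ∀ k, 2 ≤ (I k).card) :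
    HasInducedMatching P (min ((longBristles I).card + 1) d) := by
  set K := longBristles I
  have hKd : K.card ≤ d := by simpa using card_le_univ K
  obtain ⟨S, hKS, -, hS⟩ :=
    exists_subsuperset_card_eq (subset_univ K) (le_min (Nat.le_succ _) hKd) (by simp)
  have hB : ∀ k, ∃ b, b ∈ I k \ J := fun k => card_pos.1 <| by
    have := h.card_sdiff_handle_add_one k
    have := hl k
    omega
  choose B hB using hB
  have hA : ∀ k, ∃ a ∈ I k, a ≠ B k ∧ (a ∈ J → k ∉ K) := by
    intro k
    by_cases hk : k ∈ K
    · obtain ⟨a, ha, hne⟩ := exists_mem_ne (h.two_le_card_sdiff_handle_iff.2 hk) (B k)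
      exact ⟨a, (mem_sdiff.1 ha).1, hne, fun haJ => absurd haJ (mem_sdiff.1 ha).2⟩
    · obtain ⟨a, ha⟩ := card_pos.1 (h.card_inter_handle k ▸ Nat.one_pos)
      exact ⟨a, (mem_inter.1 ha).1, fun hab => (mem_sdiff.1 (hB k)).2 (hab ▸ (mem_inter.1 ha).2),
        fun _ => hk⟩
  choose A hAI hAB hAK using hA
  rw [← hS]
  refine h.hasInducedMatching S hAI hB hAB fun i hi j hj hiJ hjJ => ?_
  have hSK : (S \ K).card ≤ 1 := by
    rw [card_sdiff_of_subset hKS, hS]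
    omega
  exact card_le_one.1 hSK i (mem_sdiff.2 ⟨hi, hAK i hiJ⟩) j (mem_sdiff.2 ⟨hj, hAK j hjJ⟩)

theorem le_of_hasInducedMatching (h : IsPureBrush P J d I) {m : ℕ}
    (hm : HasInducedMatching P m) : m ≤ min ((longBristles I).card + 1) d := by
  obtain ⟨A, B, hatt, hAinj, hBinj, hABne, hind⟩ := hm
  choose g hg using fun i => h.exists_mem_bristle (hatt i).left_mem
  have hg_inj : Function.Injective g := fun i j hij => by
    by_contra hne
    exact (hind i j hne).1 (h.attacks_iff.2 ⟨hAinj i j hne, Or.inr ⟨g i, hg i, hij ▸ hg j⟩⟩)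
  set E := univ.filter fun i => A i ∈ J ∨ B i ∈ J
  have hE : E.card ≤ 1 := by
    refine card_le_one.2 fun i hi j hj => ?_
    by_contra hij
    have hJJ : ∀ {c e : Cell}, c ∈ J → e ∈ J → c ≠ e → Attacks P c e :=
      fun hc he hce => h.attacks_iff.2 ⟨hce, Or.inl ⟨hc, he⟩⟩
    simp only [E, mem_filter, mem_univ, true_and] at hi hj
    rcases hi with hi | hi <;> rcases hj with hj | hj
    · exact (hind i j hij).1 (hJJ hi hj (hAinj i j hij))
    · exact (hind i j hij).2.1 (hJJ hi hj (hABne i j))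
    · exact (hind j i (Ne.symm hij)).2.1 (hJJ hj hi (hABne j i))
    · exact (hind i j hij).2.2 (hJJ hi hj (hBinj i j hij))
  have hEc : ∀ i ∈ Eᶜ, g i ∈ longBristles I := by
    intro i hi
    simp only [E, mem_compl, mem_filter, mem_univ, true_and, not_or] at hi
    obtain ⟨k, hAk, hBk⟩ := ((h.attacks_iff.1 (hatt i)).2.resolve_left fun hJ => hi.1 hJ.1)
    obtain rfl := h.eq_of_mem_bristle hAk (hg i)
    exact h.two_le_card_sdiff_handle_iff.1 (one_lt_card.2
      ⟨A i, mem_sdiff.2 ⟨hAk, hi.1⟩, B i, mem_sdiff.2 ⟨hBk, hi.2⟩, hABne i i⟩)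
  have hEc_card : Eᶜ.card ≤ (longBristles I).card :=
    card_le_card_of_injOn g hEc hg_inj.injOn
  have hm : E.card + Eᶜ.card = m := by simp [card_add_card_compl]
  exact le_min (by omega) (by simpa using Fintype.card_le_of_injective g hg_inj)

theorem card_inter_bristle_le_one (h : IsPureBrush P J d I) {F : Finset Cell} (hF : IsRookSet P F)
    (k : Fin d) : (F ∩ I k).card ≤ 1 :=
  card_le_one.2 fun u hu v hv => by
    by_contra huv
    rw [mem_inter] at hu hv
    exact hF.2 u hu.1 v hv.1 (h.attacks_iff.2 ⟨huv, Or.inr ⟨k, hu.2, hv.2⟩⟩)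

theorem card_bristleSupport (h : IsPureBrush P J d I) {F : Finset Cell} (hF : IsRookSet P F) :
    (bristleSupport I F).card = F.card := by
  have hcover : univ.biUnion (fun k => F ∩ I k) = F := by
    rw [← inter_biUnion]
    exact inter_eq_left.2 fun c hc => by simpa using h.exists_mem_bristle (hF.1 hc)
  have hdisj : ((univ : Finset (Fin d)) : Set (Fin d)).PairwiseDisjoint fun k => F ∩ I k :=
    fun j _ k _ hjk => disjoint_left.2 fun c hcj hck =>
      hjk (h.eq_of_mem_bristle (mem_inter.1 hcj).2 (mem_inter.1 hck).2)
  calc (bristleSupport I F).card = ∑ k, if (F ∩ I k).Nonempty then 1 else 0 := card_filter _ _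
    _ = ∑ k, (F ∩ I k).card := sum_congr rfl fun k _ => by
        have := h.card_inter_bristle_le_one hF k
        split_ifs with hne
        · exact (le_antisymm this hne.card_pos).symm
        · rw [not_nonempty_iff_eq_empty.1 hne, card_empty]
    _ = F.card := by
        rw [← card_biUnion (by simpa using hdisj), hcover]

theorem subset_biUnion_iff (h : IsPureBrush P J d I) {F : Finset Cell} (hF : F ⊆ P)
    {T : Finset (Fin d)} : F ⊆ T.biUnion I ↔ bristleSupport I F ⊆ T := by
  simp only [bristleSupport, subset_iff, mem_biUnion, mem_filter, mem_univ, true_and]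
  constructor
  · rintro hFT k ⟨c, hc⟩
    rw [mem_inter] at hc
    obtain ⟨j, hj, hcj⟩ := hFT hc.1
    exact h.eq_of_mem_bristle hcj hc.2 ▸ hj
  · intro hFT c hc
    obtain ⟨k, hk⟩ := h.exists_mem_bristle (hF hc)
    exact ⟨k, hFT ⟨c, mem_inter.2 ⟨hc, hk⟩⟩, hk⟩

theorem card_filter_subset_biUnion (h : IsPureBrush P J d I) {F : Finset Cell}
    (hF : IsRookSet P F) (s : ℕ) :
    ((powersetCard s univ).filter fun T => F ⊆ T.biUnion I).card =
      if F.card ≤ s then (d - F.card).choose (s - F.card) else 0 := by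
  rw [filter_congr fun T _ => h.subset_biUnion_iff hF.1, ← h.card_bristleSupport hF]
  split_ifs with hs
  · simpa using card_filter_powersetCard_subset _ _ s (subset_univ _) hs
  · refine card_eq_zero.2 (filter_eq_empty_iff.2 fun T hT hST => hs ?_)
    exact (mem_powersetCard.1 hT).2 ▸ card_le_card hST

theorem isRookSet_insert (h : IsPureBrush P J d I) {F : Finset Cell} (hF : IsRookSet P F)
    {k : Fin d} {x : Cell} (hx : x ∈ I k \ J) (hFk : ∀ e ∈ F, e ∈ I k → e = x) :
    IsRookSet P (insert x F) := by
  rw [mem_sdiff] at hx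
  have hxF : ∀ e ∈ F, ¬Attacks P x e := by
    intro e he hatt
    obtain ⟨hxe, ⟨hxJ, -⟩ | ⟨j, hxj, hej⟩⟩ := h.attacks_iff.1 hatt
    · exact hx.2 hxJ
    · exact hxe (hFk e he (h.eq_of_mem_bristle hxj hx.1 ▸ hej)).symm
  refine ⟨insert_subset (h.bristle_subset k hx.1) hF.1, ?_⟩
  simp only [forall_mem_insert]
  exact ⟨⟨fun hatt => hatt.1 rfl, hxF⟩, fun c hc => ⟨fun hatt => hxF c hc hatt.symm, hF.2 c hc⟩⟩

theorem exists_singletons_of_card_eq_two (h : IsPureBrush P J d I) {p : Fin d}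
    (hp : (I p).card = 2) : ∃ c u, I p ∩ J = {c} ∧ I p \ J = {u} := by
  obtain ⟨c, hc⟩ := card_eq_one.1 (h.card_inter_handle p)
  obtain ⟨u, hu⟩ := card_eq_one.1 (by have := h.card_sdiff_handle_add_one p; omega :
    (I p \ J).card = 1)
  exact ⟨c, u, hc, hu⟩

/-- Two bristles of length two inside `T` make the alternating sum vanish: toggling the free cell
of the second bristle is a sign-reversing involution on the rook sets containing the handle cell
of the first, and toggling the free cell of the first one on those avoiding it. -/
theorem sum_neg_one_pow_card_eq_zero (h : IsPureBrush P J d I) {T : Finset (Fin d)} {p q : Fin d}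
    (hpT : p ∈ T) (hqT : q ∈ T) (hpq : p ≠ q) (hp : (I p).card = 2) (hq : (I q).card = 2) :
    ∑ F ∈ (rookSets P).filter (· ⊆ T.biUnion I), (-1 : ℤ) ^ F.card = 0 := by
  obtain ⟨cp, up, hcp, hup⟩ := h.exists_singletons_of_card_eq_two hp
  obtain ⟨cq, uq, hcq, huq⟩ := h.exists_singletons_of_card_eq_two hq
  have hcp' : cp ∈ I p ∧ cp ∈ J := mem_inter.1 (hcp ▸ mem_singleton_self cp)
  have hup' : up ∈ I p \ J := hup ▸ mem_singleton_self up
  have huq' : uq ∈ I q \ J := huq ▸ mem_singleton_self uq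
  have hcpu : ∀ {u}, u ∈ I p \ J ∨ u ∈ I q \ J → cp ≠ u := by
    rintro u (hu | hu) rfl <;> exact (mem_sdiff.1 hu).2 hcp'.2
  set D := (rookSets P).filter (· ⊆ T.biUnion I)
  have hins : ∀ {k x}, k ∈ T → x ∈ I k \ J → ∀ F ∈ D, (∀ e ∈ F, e ∈ I k → e = x) →
      insert x F ∈ D := by
    intro k x hk hx F hF hFk
    simp only [D, mem_filter, mem_rookSets] at hF ⊢
    exact ⟨h.isRookSet_insert hF.1 hx hFk,
      insert_subset (mem_biUnion.2 ⟨k, hk, (mem_sdiff.1 hx).1⟩) hF.2⟩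
  have herase : ∀ x, ∀ F ∈ D, F.erase x ∈ D := by
    intro x F hF
    simp only [D, mem_filter, mem_rookSets] at hF ⊢
    exact ⟨hF.1.mono (erase_subset x F), (erase_subset x F).trans hF.2⟩
  have hsign : ∀ x (F : Finset Cell), x ∉ F → (-1 : ℤ) ^ (insert x F).card = -(-1) ^ F.card :=
    fun x F hx => by rw [card_insert_of_notMem hx, pow_succ, mul_neg_one]
  rw [← sum_filter_add_sum_filter_not D (cp ∈ ·) fun F => (-1 : ℤ) ^ F.card,
    sum_eq_zero_of_insert_erase_mem (D := D.filter (cp ∈ ·)) uq ?_ ?_ fun F _ => hsign uq F,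
    sum_eq_zero_of_insert_erase_mem (D := D.filter (cp ∉ ·)) up ?_ ?_ fun F _ => hsign up F,
    add_zero]
  · intro F hF
    rw [mem_filter] at hF ⊢
    refine ⟨hins hpT hup' F hF.1 fun e he hep => ?_, fun hc => hF.2 ?_⟩
    · have heJ : e ∉ J := by
        intro heJ
        have hecp : e ∈ I p ∩ J := mem_inter.2 ⟨hep, heJ⟩
        rw [hcp, mem_singleton] at hecp
        exact hF.2 (hecp ▸ he)
      exact mem_singleton.1 (hup ▸ mem_sdiff.2 ⟨hep, heJ⟩)
    · exact (mem_insert.1 hc).resolve_left (hcpu (Or.inl hup'))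
  · intro F hF
    rw [mem_filter] at hF ⊢
    exact ⟨herase up F hF.1, fun hc => hF.2 (mem_of_mem_erase hc)⟩
  · intro F hF
    rw [mem_filter] at hF ⊢
    refine ⟨hins hqT huq' F hF.1 fun e he heq => ?_, mem_insert_of_mem hF.2⟩
    have hrook := mem_rookSets.1 (mem_filter.1 hF.1).1
    have heJ : e ∉ J := fun heJ => hrook.2 cp hF.2 e he
      ((h.attacks_iff_of_ne hcp'.1 heq hpq).2 ⟨hcp'.2, heJ⟩)
    exact mem_singleton.1 (huq ▸ mem_sdiff.2 ⟨heq, heJ⟩)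
  · intro F hF
    rw [mem_filter] at hF ⊢
    exact ⟨herase uq F hF.1, mem_erase.2 ⟨hcpu (Or.inr huq'), hF.2⟩⟩

theorem sum_choose_mul_card_rookSets (h : IsPureBrush P J d I) (s : ℕ) :
    ∑ i ∈ range (s + 1), (-1 : ℤ) ^ i * ((d - i).choose (s - i) : ℤ) *
        (((rookSets P).filter (·.card = i)).card : ℤ) =
      ∑ T ∈ powersetCard s univ,
        ∑ F ∈ (rookSets P).filter (· ⊆ T.biUnion I), (-1 : ℤ) ^ F.card := by
  set R := rookSets P
  have hrange : ∑ i ∈ range (s + 1), (-1 : ℤ) ^ i * ((d - i).choose (s - i) : ℤ) *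
      ((R.filter (·.card = i)).card : ℤ) =
      ∑ F ∈ R.filter (·.card ≤ s), (-1 : ℤ) ^ F.card * ((d - F.card).choose (s - F.card) : ℤ) := by
    refine Eq.trans ?_ (sum_fiberwise_of_maps_to' (t := range (s + 1)) (g := card)
      (fun F hF => mem_range.2 (Nat.lt_succ_of_le (mem_filter.1 hF).2))
      fun i => (-1 : ℤ) ^ i * ((d - i).choose (s - i) : ℤ))
    refine sum_congr rfl fun i hi => ?_
    have hfilter : R.filter (fun F => F.card ≤ s ∧ F.card = i) = R.filter (·.card = i) :=
      filter_congr fun F _ => ⟨And.right, fun hF => ⟨hF ▸ Nat.lt_succ_iff.1 (mem_range.1 hi), hF⟩⟩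
    rw [sum_const, nsmul_eq_mul, filter_filter, hfilter, mul_comm]
  have hcount : ∑ T ∈ powersetCard s univ, ∑ F ∈ R.filter (· ⊆ T.biUnion I), (-1 : ℤ) ^ F.card =
      ∑ F ∈ R, (-1 : ℤ) ^ F.card *
        (((powersetCard s univ).filter fun T => F ⊆ T.biUnion I).card : ℤ) := by
    simp_rw [sum_filter]
    rw [sum_comm]
    refine sum_congr rfl fun F _ => ?_
    rw [← sum_filter, sum_const, nsmul_eq_mul, mul_comm]
  rw [hrange, hcount, sum_filter]
  refine sum_congr rfl fun F hF => ?_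
  rw [h.card_filter_subset_biUnion (mem_rookSets.1 hF)]
  split_ifs <;> simp

theorem hVector_eq_zero (h : IsPureBrush P J d I) (hl : ∀ k, 2 ≤ (I k).card) {s : ℕ}
    (hs : (longBristles I).card + 1 < s) :
    ∑ i ∈ range (s + 1), (-1 : ℤ) ^ (s - i) * ((d - i).choose (s - i) : ℤ) *
      ({F : Finset Cell | F.card = i ∧ IsRookSet P F}.ncard : ℤ) = 0 := by
  have hshort : ∀ T ∈ powersetCard s univ,
      ∃ p ∈ T, ∃ q ∈ T, p ≠ q ∧ (I p).card = 2 ∧ (I q).card = 2 := by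
    intro T hT
    have hlong : (T.filter (· ∈ longBristles I)).card ≤ (longBristles I).card :=
      card_le_card fun k hk => (mem_filter.1 hk).2
    have := card_filter_add_card_filter_not (s := T) (· ∈ longBristles I)
    obtain ⟨p, hp, q, hq, hpq⟩ := one_lt_card.1
      (by rw [(mem_powersetCard.1 hT).2] at this; omega : 1 < (T.filter (· ∉ longBristles I)).card)
    simp only [longBristles, mem_filter, mem_univ, true_and, not_le] at hp hq
    exact ⟨p, hp.1, q, hq.1, hpq, by have := hl p; omega, by have := hl q; omega⟩
  calc _ = (-1 : ℤ) ^ s * ∑ i ∈ range (s + 1), (-1 : ℤ) ^ i * ((d - i).choose (s - i) : ℤ) *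
        (((rookSets P).filter (·.card = i)).card : ℤ) := by
        rw [mul_sum]
        refine sum_congr rfl fun i hi => ?_
        have hsi : s + i = (s - i) + 2 * i := by rw [mem_range] at hi; omega
        have hsign : (-1 : ℤ) ^ (s - i) = (-1) ^ s * (-1) ^ i := by
          rw [← pow_add, hsi, pow_add, pow_mul, neg_one_sq, one_pow, mul_one]
        rw [ncard_rookSets_of_card, hsign]
        ring
    _ = 0 := by
        rw [h.sum_choose_mul_card_rookSets, sum_eq_zero fun T hT => ?_, mul_zero]
        obtain ⟨p, hp, q, hq, hpq, hp2, hq2⟩ := hshort T hT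
        exact h.sum_neg_one_pow_card_eq_zero hp hq hpq hp2 hq2

end IsPureBrush

/-- For a pure brush polyomino with all bristles of length at least 2, the
induced matching number equals `min (t+1) d` where `t` is the number of bristles
of length at least 3; moreover `h_s = 0` for `min (t+1) d < s ≤ d`. -/
theorem statement18 (P J : Finset Cell) (d : ℕ) (I : Fin d → Finset Cell)
    (h : IsPureBrush P J d I) (hl : ∀ k, 2 ≤ (I k).card)
    (t : ℕ) (ht : t = (Finset.univ.filter (fun k => 3 ≤ (I k).card)).card) :
    matchNum P = min (t + 1) d ∧
    ∀ s : ℕ, min (t + 1) d < s → s ≤ d →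
      (∑ i ∈ Finset.range (s + 1),
          (-1 : ℤ) ^ (s - i) * (Nat.choose (d - i) (s - i) : ℤ) *
            ({F : Finset Cell | F.card = i ∧ IsRookSet P F}.ncard : ℤ)) = 0 := by
  change t = (longBristles I).card at ht
  subst ht
  refine ⟨IsGreatest.csSup_eq ⟨h.hasInducedMatching_min hl, fun m hm => ?_⟩, fun s hs hsd => ?_⟩
  · exact h.le_of_hasInducedMatching hm
  · exact h.hVector_eq_zero hl (by omega)
end
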